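/- arXiv:2106.01236 — 5 statements merged into one kernel-verified Lean document; each statement's English description precedes it below -/
import Mathlib

section
/- Let s, u, v be points forming a triangle with interior angle π/5 at s, π/2 at v, and 3π/10 at u. Let t be a point on segment uv and let w be a point in the (closed) triangle △stu. Then for every K ≥ 1/(cos(π/5) − sin(π/5)), we have |sw| + K·|wt| ≤ K·|st|. -/
open Real EuclideanGeometry RealInnerProductSpace

set_option maxHeartbeats 1000000 in
theorem lemma_t253 (s u v t w : EuclideanSpace ℝ (Fin 2))
    (hs : ∠ v s u = π / 5) (hv : ∠ s v u = π / 2) (hu : ∠ s u v = 3 * π / 10)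
    (ht : t ∈ segment ℝ u v)
    (hw : w ∈ convexHull ℝ ({s, t, u} : Set (EuclideanSpace ℝ (Fin 2))))
    (K : ℝ) (hK : 1 / (Real.cos (π / 5) - Real.sin (π / 5)) ≤ K) :
    dist s w + K * dist w t ≤ K * dist s t := by
  have hπ := Real.pi_pos
  set c := Real.cos (π / 5) with hcdef
  set sn := Real.sin (π / 5) with hsndef
  -- basic trig facts
  have hsn0 : 0 < sn := Real.sin_pos_of_pos_of_lt_pi (by linarith) (by linarith)
  have hc1 : c ≤ 1 := Real.cos_le_one _
  have hcs : sn < c := by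
    have h1 : Real.cos (π / 2 - π / 5) = sn := Real.cos_pi_div_two_sub _
    have h2 : Real.cos (π / 2 - π / 5) < Real.cos (π / 5) :=
      Real.cos_lt_cos_of_nonneg_of_le_pi (by linarith) (by linarith) (by linarith)
    linarith
  have hc0 : 0 < c := lt_trans hsn0 hcs
  have hd0 : 0 < c - sn := by linarith
  have hpyth : sn ^ 2 + c ^ 2 = 1 := Real.sin_sq_add_cos_sq _
  -- nondegeneracy
  have hvs : v ≠ s := by
    intro h; rw [h, EuclideanGeometry.angle_self_left] at hs; linarith
  have hus : u ≠ s := by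
    intro h; rw [h, EuclideanGeometry.angle_self_right] at hs; linarith
  have huv : u ≠ v := by
    intro h; rw [h, EuclideanGeometry.angle_self_of_ne hvs] at hs; linarith
  have ha0 : 0 < dist s v := dist_pos.mpr (Ne.symm hvs)
  have hh0 : 0 < dist s u := dist_pos.mpr (Ne.symm hus)
  have hb0 : 0 < dist u v := dist_pos.mpr huv
  set a := dist s v with hadef
  set b := dist u v with hbdef
  set h := dist s u with hhdef
  -- law of cosines
  have law1 := EuclideanGeometry.law_cos s v u
  rw [hv, Real.cos_pi_div_two] at law1
  have law2 := EuclideanGeometry.law_cos v s u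
  rw [hs] at law2
  rw [dist_comm v s, dist_comm u s, dist_comm v u] at law2
  rw [← hadef, ← hbdef, ← hhdef] at law1 law2
  -- law1 : h*h = a*a + b*b - 2*a*b*0 ; law2 : b*b = a*a + h*h - 2*a*h*c
  have ha : a = c * h := by
    have ha' : a * (c * h - a) = 0 := by linear_combination (law1 + law2) / 2
    rcases mul_eq_zero.mp ha' with h0 | h0
    · exact absurd h0 ha0.ne'
    · linarith
  have hb : b = sn * h := by
    have hb2 : (b - sn * h) * (b + sn * h) = 0 := by
      linear_combination (-1 : ℝ) * law1 - (a + c*h) * ha - h^2 * hpyth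
    rcases mul_eq_zero.mp hb2 with h0 | h0
    · linarith
    · nlinarith [mul_pos hsn0 hh0]
  -- inner product zero at v
  have hinner : ⟪s - v, u - v⟫ = 0 := by
    rw [InnerProductGeometry.inner_eq_zero_iff_angle_eq_pi_div_two]
    exact hv
  -- t on segment
  obtain ⟨p, q, hp, hq, hpq, hT⟩ := ht
  have hut : dist u t = q * b := by
    have h1 : u - t = q • (u - v) := by
      rw [← hT]; rw [show p = 1 - q by linarith]; module
    rw [dist_eq_norm, h1, norm_smul, Real.norm_eq_abs, abs_of_nonneg hq,
      hbdef, dist_eq_norm]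
  have hst2 : dist s t ^ 2 = a ^ 2 + p ^ 2 * b ^ 2 := by
    have h1 : s - t = (s - v) - p • (u - v) := by
      rw [← hT]; rw [show q = 1 - p by linarith]; module
    rw [dist_eq_norm, h1, norm_sub_sq_real, real_inner_smul_right, hinner,
      norm_smul, Real.norm_eq_abs]
    rw [hadef, hbdef, dist_eq_norm, dist_eq_norm]
    rw [mul_pow, sq_abs]
    ring
  -- key inequality at vertex u
  have key : dist u t + (c - sn) * h ≤ dist s t := by
    have hexp : (q * (sn * h) + (c - sn) * h) ^ 2 + 2 * c * sn * h ^ 2 * p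
        = (c * h) ^ 2 + p ^ 2 * (sn * h) ^ 2 := by
      have hp1 : p = 1 - q := by linarith
      rw [hp1]; ring
    have hrhs2 : (q * b + (c - sn) * h) ^ 2 ≤ dist s t ^ 2 := by
      rw [hst2, ha, hb]
      have hnn : 0 ≤ 2 * c * sn * h ^ 2 * p := by positivity
      linarith [hexp]
    have hx : 0 ≤ q * b + (c - sn) * h :=
      add_nonneg (mul_nonneg hq hb0.le) (mul_nonneg hd0.le hh0.le)
    rw [hut]
    calc q * b + (c - sn) * h = Real.sqrt ((q * b + (c - sn) * h) ^ 2) :=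
          (Real.sqrt_sq hx).symm
      _ ≤ Real.sqrt (dist s t ^ 2) := Real.sqrt_le_sqrt hrhs2
      _ = dist s t := Real.sqrt_sq dist_nonneg
  -- K facts
  have hK0 : (0:ℝ) < K := lt_of_lt_of_le (one_div_pos.mpr hd0) hK
  have hK1 : 1 ≤ K := le_trans (one_le_one_div hd0 (by linarith)) hK
  have hKc : 1 ≤ K * (c - sn) := by
    exact (div_le_iff₀ hd0).mp hK
  -- convexity argument
  have hset : convexHull ℝ ({s, t, u} : Set (EuclideanSpace ℝ (Fin 2))) ⊆
      {x : EuclideanSpace ℝ (Fin 2) | dist s x + K * dist x t ≤ K * dist s t} := by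
    apply convexHull_min
    · rw [Set.insert_subset_iff, Set.insert_subset_iff, Set.singleton_subset_iff]
      refine ⟨?_, ?_, ?_⟩
      · simp
      · simp only [Set.mem_setOf_eq, dist_self, mul_zero, add_zero]
        exact le_mul_of_one_le_left dist_nonneg hK1
      · simp only [Set.mem_setOf_eq]
        have h2 := mul_le_mul_of_nonneg_left key hK0.le
        have h3 := mul_nonneg (sub_nonneg.mpr hKc) hh0.le
        rw [hhdef] at h2 h3
        linarith only [h2, h3]
    · have hcv : ConvexOn ℝ Set.univ (fun x : EuclideanSpace ℝ (Fin 2) =>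
          dist s x + K * dist x t) := by
        have h1 : ConvexOn ℝ Set.univ (fun x : EuclideanSpace ℝ (Fin 2) => dist s x) := by
          simpa [dist_comm] using convexOn_dist s (convex_univ (𝕜 := ℝ))
        have h2 : ConvexOn ℝ Set.univ (fun x : EuclideanSpace ℝ (Fin 2) => dist x t) :=
          convexOn_dist t convex_univ
        exact h1.add (h2.smul hK0.le)
      have := hcv.convex_le (K * dist s t)
      simpa using this
  exact hset hw
end

section
/- Let s, u, v be points forming a triangle with interior angle 3π/10 at s, 3π/10 at v, and 2π/5 at u. Let t be a point on segment uv such that the angle ∠vst ≤ π/10, and let w be a point in the closed triangle △stu. Then for every K ≥ sin(3π/10)/(sin(2π/5) − sin(3π/10)), we have |sw| + K·|wt| ≤ K·|st|. -/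
/-!
The function `p ↦ |ps| + K·|pt|` is convex, so on the triangle `△stu` it is maximised at a
vertex. At `s` and `t` the bound is immediate (`K ≥ 1`). At `u`, the law of sines in `△stu`,
with angles `α = ∠ust ≤ 3π/10` and `∠sut = 2π/5`, turns the bound into
`sin (α + 2π/5) ≤ K (sin (2π/5) - sin α)`. The ratio `sin (α + β) / (sin β - sin α)` is
increasing in `α`, and at `α = 3π/10` it equals the threshold, since `sin (7π/10) = sin (3π/10)`.
-/

open Real EuclideanGeometry

theorem Real.sin_sub_le_sin_add_sin {x y : ℝ} (hx : 0 ≤ sin x) (hy : 0 ≤ sin y) :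
    sin (x - y) ≤ sin x + sin y := by
  rw [sin_sub]
  nlinarith [cos_le_one y, neg_one_le_cos x]

theorem Real.sin_add_mul_sub_sin_le {α β γ : ℝ} (hα : 0 ≤ α) (hαγ : α ≤ γ) (hβ : 0 ≤ β)
    (hγβ : γ + β ≤ π) :
    sin (α + β) * (sin β - sin γ) ≤ sin (γ + β) * (sin β - sin α) := by
  have hcross : sin (α + β) * sin γ - sin (γ + β) * sin α = sin β * sin (γ - α) := by
    simp only [sin_add, sin_sub]
    ring
  have hsub : sin (α + β) ≤ sin (γ + β) + sin (γ - α) := by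
    have := sin_sub_le_sin_add_sin (sin_nonneg_of_nonneg_of_le_pi (by linarith) hγβ)
      (sin_nonneg_of_nonneg_of_le_pi (x := γ - α) (by linarith) (by linarith [pi_pos]))
    rwa [show γ + β - (γ - α) = α + β by ring] at this
  have hsinβ : 0 ≤ sin β := sin_nonneg_of_nonneg_of_le_pi hβ (by linarith)
  linear_combination mul_le_mul_of_nonneg_left hsub hsinβ - hcross

theorem Real.sin_add_le_mul_sub_sin {α β γ K : ℝ} (hα : 0 ≤ α) (hαγ : α ≤ γ) (hγβ : γ < β)
    (hβ : β ≤ π / 2) (hK : sin (γ + β) / (sin β - sin γ) ≤ K) :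
    sin (α + β) ≤ K * (sin β - sin α) := by
  have hπ := pi_pos
  have hβγ : 0 < sin β - sin γ :=
    sub_pos.2 (sin_lt_sin_of_lt_of_le_pi_div_two (by linarith) hβ hγβ)
  have hβα : 0 ≤ sin β - sin α :=
    sub_nonneg.2 (sin_le_sin_of_le_of_le_pi_div_two (by linarith) hβ (by linarith))
  calc sin (α + β) ≤ sin (γ + β) / (sin β - sin γ) * (sin β - sin α) := by
        rw [div_mul_eq_mul_div, le_div_iff₀ hβγ]
        exact sin_add_mul_sub_sin_le hα hαγ (by linarith) (by linarith)
    _ ≤ K * (sin β - sin α) := mul_le_mul_of_nonneg_right hK hβα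

theorem Real.one_lt_sin_three_pi_div_ten_div_sub_sin :
    1 < sin (3 * π / 10) / (sin (2 * π / 5) - sin (3 * π / 10)) := by
  have hπ := pi_pos
  have hlt : sin (3 * π / 10) < sin (2 * π / 5) :=
    sin_lt_sin_of_lt_of_le_pi_div_two (by linarith) (by linarith) (by linarith)
  have hhalf : sin (π / 6) < sin (3 * π / 10) :=
    sin_lt_sin_of_lt_of_le_pi_div_two (by linarith) (by linarith) (by linarith)
  rw [sin_pi_div_six] at hhalf
  rw [one_lt_div (sub_pos.2 hlt)]
  linarith [sin_le_one (2 * π / 5)]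

theorem dist_add_mul_dist_le_of_mem_convexHull {E : Type*} [NormedAddCommGroup E]
    [NormedSpace ℝ E] {s t u w : E} {K : ℝ} (hK : 1 ≤ K)
    (hu : dist u s + K * dist u t ≤ K * dist s t) (hw : w ∈ convexHull ℝ {s, t, u}) :
    dist s w + K * dist w t ≤ K * dist s t := by
  have hconv : ConvexOn ℝ Set.univ fun p : E => dist p s + K * dist p t :=
    (convexOn_univ_dist s).add ((convexOn_univ_dist t).smul (by linarith))
  obtain ⟨p, hp, hwp⟩ := hconv.exists_ge_of_mem_convexHull (Set.subset_univ _) hw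
  rw [dist_comm s w]
  refine hwp.trans ?_
  rcases hp with rfl | rfl | rfl
  · simp
  · rw [dist_self, mul_zero, add_zero, dist_comm]
    exact le_mul_of_one_le_left dist_nonneg hK
  · exact hu

namespace EuclideanGeometry

variable {V P : Type*} [NormedAddCommGroup V] [InnerProductSpace ℝ V] [MetricSpace P]
  [NormedAddTorsor V P]

theorem dist_add_mul_dist_le_of_sin_angle_le {s t u : P} {K : ℝ} (hu : 0 < sin (∠ s u t))
    (h : sin (∠ s t u) ≤ K * (sin (∠ s u t) - sin (∠ u s t))) :
    dist u s + K * dist u t ≤ K * dist s t := by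
  have hut := law_sin s u t
  have hus := law_sin t u s
  rw [angle_comm t s u, dist_comm t s] at hut
  rw [angle_comm t u s] at hus
  refine le_of_mul_le_mul_left ?_ hu
  calc sin (∠ s u t) * (dist u s + K * dist u t)
      = (sin (∠ s t u) + K * sin (∠ u s t)) * dist s t := by
        linear_combination hus + K * hut
    _ ≤ K * sin (∠ s u t) * dist s t := by gcongr; linarith
    _ = sin (∠ s u t) * (K * dist s t) := by ring

end EuclideanGeometry

theorem lemma_t334_general (s u v t w : EuclideanSpace ℝ (Fin 2))
    (hs : ∠ v s u = 3 * π / 10) (hu : ∠ s u v = 2 * π / 5)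
    (ht : t ∈ segment ℝ u v) (hangle : ∠ v s t ≤ π / 10)
    (hw : w ∈ convexHull ℝ ({s, t, u} : Set (EuclideanSpace ℝ (Fin 2))))
    (K : ℝ) (hK : Real.sin (3 * π / 10) / (Real.sin (2 * π / 5) - Real.sin (3 * π / 10)) ≤ K) :
    dist s w + K * dist w t ≤ K * dist s t := by
  have hπ := pi_pos
  have hsu : s ≠ u := by rintro rfl; rw [angle_self_right] at hs; linarith
  have hsv : s ≠ v := by rintro rfl; rw [angle_self_left] at hs; linarith
  have hts : t ≠ s := by rintro rfl; rw [angle_self_right] at hangle; linarith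
  have htu : t ≠ u := by rintro rfl; rw [hs] at hangle; linarith
  have hutv : Wbtw ℝ u t v := mem_segment_iff_wbtw.mp ht
  have hB : ∠ s u t = 2 * π / 5 := (hutv.angle_eq_right s htu).trans hu
  have hA : ∠ u s t ≤ 3 * π / 10 := by
    have := angle_add_of_ne_of_ne hsu hsv hutv
    rw [angle_comm u s v, hs] at this
    linarith [angle_nonneg t s v]
  have hC : ∠ s t u = π - (∠ u s t + 2 * π / 5) := by
    have := angle_add_angle_add_angle_eq_pi u hts
    rw [angle_comm t u s, hB] at this
    linarith
  refine dist_add_mul_dist_le_of_mem_convexHull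
    (one_lt_sin_three_pi_div_ten_div_sub_sin.trans_le hK).le ?_ hw
  refine dist_add_mul_dist_le_of_sin_angle_le
    (by rw [hB]; exact sin_pos_of_pos_of_lt_pi (by linarith) (by linarith)) ?_
  rw [hC, sin_pi_sub, hB]
  refine sin_add_le_mul_sub_sin (angle_nonneg _ _ _) hA (by linarith) (by linarith) ?_
  rwa [show 3 * π / 10 + 2 * π / 5 = π - 3 * π / 10 by ring, sin_pi_sub]

theorem lemma_t334 (s u v t w : EuclideanSpace ℝ (Fin 2))
    (hs : ∠ v s u = 3 * π / 10) (hv : ∠ s v u = 3 * π / 10) (hu : ∠ s u v = 2 * π / 5)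
    (ht : t ∈ segment ℝ u v) (hangle : ∠ v s t ≤ π / 10)
    (hw : w ∈ convexHull ℝ ({s, t, u} : Set (EuclideanSpace ℝ (Fin 2))))
    (K : ℝ) (hK : Real.sin (3 * π / 10) / (Real.sin (2 * π / 5) - Real.sin (3 * π / 10)) ≤ K) :
    dist s w + K * dist w t ≤ K * dist s t :=
  lemma_t334_general s u v t w hs hu ht hangle hw K hK
end

section
/- The constant sin(3π/10)/(sin(2π/5) − sin(3π/10)) is strictly less than 5.70. -/
open Real

theorem const_lt_570 :
    Real.sin (3 * π / 10) / (Real.sin (2 * π / 5) - Real.sin (3 * π / 10)) < 5.70 := by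
  have hs0 : (0:ℝ) ≤ 5 := by norm_num
  have hs : Real.sqrt 5 ^ 2 = 5 := Real.sq_sqrt hs0
  have hsnn : (0:ℝ) ≤ Real.sqrt 5 := Real.sqrt_nonneg 5
  have ha : Real.sin (3 * π / 10) = (1 + Real.sqrt 5) / 4 := by
    have : (3 * π / 10 : ℝ) = π / 2 - π / 5 := by ring
    rw [this, Real.sin_pi_div_two_sub, Real.cos_pi_div_five]
  have hb : Real.sin (2 * π / 5) = Real.cos (π / 10) := by
    have : (2 * π / 5 : ℝ) = π / 2 - π / 10 := by ring
    rw [this, Real.sin_pi_div_two_sub]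
  have hbsq : Real.cos (π / 10) ^ 2 = (5 + Real.sqrt 5) / 8 := by
    have h := Real.cos_two_mul (π / 10)
    have h2 : (2 * (π / 10) : ℝ) = π / 5 := by ring
    rw [h2, Real.cos_pi_div_five] at h
    linarith
  have hbpos : 0 < Real.cos (π / 10) := by
    apply Real.cos_pos_of_mem_Ioo
    constructor <;> [nlinarith [Real.pi_pos]; nlinarith [Real.pi_pos]]
  have hapos : 0 < Real.sin (3 * π / 10) := by
    rw [ha]; nlinarith
  have key : 6.7 * Real.sin (3 * π / 10) < 5.7 * Real.sin (2 * π / 5) := by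
    rw [ha, hb]
    have hsq : (6.7 * ((1 + Real.sqrt 5) / 4)) ^ 2 < (5.7 * Real.cos (π / 10)) ^ 2 := by
      have : (5.7 * Real.cos (π / 10)) ^ 2 = 5.7 ^ 2 * ((5 + Real.sqrt 5) / 8) := by
        rw [mul_pow, hbsq]
      rw [this]; nlinarith
    have h1 : 0 ≤ 5.7 * Real.cos (π / 10) := by positivity
    nlinarith [le_abs_self (6.7 * ((1 + Real.sqrt 5) / 4)),
      neg_abs_le (6.7 * ((1 + Real.sqrt 5) / 4)),
      sq_abs (6.7 * ((1 + Real.sqrt 5) / 4)),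
      abs_nonneg (6.7 * ((1 + Real.sqrt 5) / 4))]
  have hd : 0 < Real.sin (2 * π / 5) - Real.sin (3 * π / 10) := by nlinarith
  rw [div_lt_iff₀ hd]
  nlinarith
end

section
/- For γ ∈ [0, π/10] and K ≥ 1/cos(2π/5), the function Ψ'(γ) = (sin γ − K·sin(2π/5))/sin(2π/5 − γ) is monotonically non-increasing on [0, π/10]. -/
/-!
Writing `a = 2π/5`, the quotient rule together with `sin a = sin (a - γ) cos γ + cos (a - γ) sin γ`
gives `Ψ'(γ) = sin a (1 - K cos (a - γ)) / sin² (a - γ)`. For `γ ∈ [0, π/10]` we have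
`cos (a - γ) ≥ cos a`, so `K cos (a - γ) ≥ K cos a ≥ 1` and the derivative is nonpositive.
-/

open Real

theorem hasDerivAt_sin_sub_const_div_sin_sub (a c x : ℝ) (hx : sin (a - x) ≠ 0) :
    HasDerivAt (fun γ => (sin γ - c) / sin (a - γ))
      ((sin a - c * cos (a - x)) / sin (a - x) ^ 2) x := by
  have hnum : HasDerivAt (fun γ => sin γ - c) (cos x) x := (hasDerivAt_sin x).sub_const c
  have hden : HasDerivAt (fun γ => sin (a - γ)) (-cos (a - x)) x := by
    simpa using ((hasDerivAt_id' x).const_sub a).sin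
  refine (hnum.div hden hx).congr_deriv ?_
  have hsin_a : sin a = sin (a - x) * cos x + cos (a - x) * sin x := by
    rw [← sin_add, sub_add_cancel]
  rw [hsin_a]
  ring

theorem antitoneOn_sin_sub_const_div_sin_sub {a c : ℝ} {D : Set ℝ} (hD : Convex ℝ D)
    (hsin : ∀ x ∈ D, sin (a - x) ≠ 0) (hcos : ∀ x ∈ interior D, sin a ≤ c * cos (a - x)) :
    AntitoneOn (fun γ => (sin γ - c) / sin (a - γ)) D := by
  have hderiv := fun x hx => hasDerivAt_sin_sub_const_div_sin_sub a c x (hsin x hx)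
  refine antitoneOn_of_deriv_nonpos hD
    (fun x hx => (hderiv x hx).continuousAt.continuousWithinAt)
    (fun x hx => (hderiv x (interior_subset hx)).differentiableAt.differentiableWithinAt)
    fun x hx => ?_
  rw [(hderiv x (interior_subset hx)).deriv]
  exact div_nonpos_of_nonpos_of_nonneg (sub_nonpos.mpr (hcos x hx)) (sq_nonneg _)

theorem psi_antitone (K : ℝ) (hK : 1 / Real.cos (2 * π / 5) ≤ K) :
    AntitoneOn (fun γ : ℝ => (Real.sin γ - K * Real.sin (2 * π / 5)) / Real.sin (2 * π / 5 - γ))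
      (Set.Icc 0 (π / 10)) := by
  have hπ := pi_pos
  have hcos_pos : 0 < cos (2 * π / 5) := cos_pos_of_mem_Ioo ⟨by linarith, by linarith⟩
  have hsin_pos : 0 < sin (2 * π / 5) := sin_pos_of_pos_of_lt_pi (by positivity) (by linarith)
  have hK_cos : 1 ≤ K * cos (2 * π / 5) := by rwa [div_le_iff₀ hcos_pos] at hK
  refine antitoneOn_sin_sub_const_div_sin_sub (convex_Icc _ _) (fun x hx => ?_) fun x hx => ?_
  · exact (sin_pos_of_pos_of_lt_pi (by linarith [hx.2]) (by linarith [hx.1])).ne'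
  · rw [interior_Icc] at hx
    have hcos_le : cos (2 * π / 5) ≤ cos (2 * π / 5 - x) :=
      cos_le_cos_of_nonneg_of_le_pi (by linarith [hx.2]) (by linarith) (by linarith [hx.1])
    have hK_pos : 0 < K := lt_of_lt_of_le (by positivity) hK
    nlinarith [mul_le_mul_of_nonneg_left hcos_le hK_pos.le]
end

section
/- Let T be a triangle with apex a, apex angle 2π/5, whose opposite side contains a point b such that the angle α between ab and the bisector-side satisfies 0 ≤ α ≤ π/10. Split T along ab into left triangle T^ℓ (containing the left base vertex ℓ) and right triangle T^r (containing the right base vertex r). Then |bℓ| ≤ |ba| and |br| ≤ |ba|, and hence every point p ∈ T satisfies |bp| ≤ |ba|. -/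
open Real Complex

/-!
Since `b = D (sin α + i cos α)` has modulus `D` and the base lies on the horizontal line
`Im z = D cos α`, the differences `b - ℓ` and `b - r` are real, namely `D (sin α - cos α tan θ)`
for `θ = ∓π/5`. This equals `D sin (α - θ) / cos θ`, which is at most `D` in absolute value as
soon as `|α - θ| + |θ| ≤ π/2`: for `θ = -π/5` this is `α ≤ π/10`, and for `θ = π/5` it
holds on all of `[-π/10, π/2]`.
The closed ball of radius `|ba|` about `b` is convex, so it contains the whole triangle.
-/

lemma Real.abs_sin_le_cos {x θ : ℝ} (h : |x| + |θ| ≤ π / 2) : |Real.sin x| ≤ Real.cos θ := by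
  rw [← Real.cos_abs θ, ← Real.sin_pi_div_two_sub]
  have hx := abs_le.1 (le_sub_iff_add_le.2 h)
  have hθ := abs_nonneg θ
  rw [abs_le, neg_le, ← Real.sin_neg]
  constructor <;>
    exact Real.sin_le_sin_of_le_of_le_pi_div_two (by linarith) (by linarith) (by linarith)

lemma Real.sin_sub_cos_mul_tan {α θ : ℝ} (hθ : Real.cos θ ≠ 0) :
    Real.sin α - Real.cos α * Real.tan θ = Real.sin (α - θ) / Real.cos θ := by
  rw [Real.tan_eq_sin_div_cos, Real.sin_sub]
  field_simp

lemma Real.abs_sin_sub_cos_mul_tan_le_one {α θ : ℝ} (hθ : |θ| < π / 2)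
    (h : |α - θ| + |θ| ≤ π / 2) : |Real.sin α - Real.cos α * Real.tan θ| ≤ 1 := by
  have hcos : 0 < Real.cos θ := Real.cos_pos_of_mem_Ioo (abs_lt.1 hθ)
  rw [Real.sin_sub_cos_mul_tan hcos.ne', abs_div, abs_of_pos hcos, div_le_one hcos]
  exact Real.abs_sin_le_cos h

lemma Complex.dist_mul_sin_add_cos_mul_I_zero (D α : ℝ) (hD : 0 ≤ D) :
    dist ((D : ℂ) * (Real.sin α + Real.cos α * I)) 0 = D := by
  rw [dist_zero_right, norm_mul, Complex.norm_real, Real.norm_of_nonneg hD,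
    Complex.norm_add_mul_I, Real.sin_sq_add_cos_sq, Real.sqrt_one, mul_one]

lemma Complex.dist_mul_sin_add_cos_mul_I_horizontal (D α t : ℝ) (hD : 0 ≤ D) :
    dist ((D : ℂ) * (Real.sin α + Real.cos α * I)) ((D : ℂ) * (Real.cos α : ℂ) * (t + I)) =
      D * |Real.sin α - Real.cos α * t| := by
  rw [Complex.dist_eq,
    show (D : ℂ) * (Real.sin α + Real.cos α * I) - (D : ℂ) * (Real.cos α : ℂ) * (t + I) =
      ((D * (Real.sin α - Real.cos α * t) : ℝ) : ℂ) by push_cast; ring,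
    Complex.norm_real, Real.norm_eq_abs, abs_mul, abs_of_nonneg hD]

theorem canonical_triangle_dist (D α : ℝ) (hD : 0 < D) (hα0 : 0 ≤ α) (hα1 : α ≤ π / 10)
    (a b l r : ℂ)
    (ha : a = 0)
    (hb : b = (D : ℂ) * (Real.sin α + Real.cos α * Complex.I))
    (hl : l = (D : ℂ) * (Real.cos α : ℂ) * (-(Real.tan (π / 5)) + Complex.I))
    (hr : r = (D : ℂ) * (Real.cos α : ℂ) * ((Real.tan (π / 5)) + Complex.I)) :
    dist b l ≤ dist b a ∧ dist b r ≤ dist b a ∧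
      ∀ p ∈ convexHull ℝ ({a, l, r} : Set ℂ), dist b p ≤ dist b a := by
  have hba : dist b a = D := by
    rw [hb, ha, Complex.dist_mul_sin_add_cos_mul_I_zero D α hD.le]
  have hbl : dist b l ≤ dist b a := by
    rw [hba, hb, hl, ← Complex.ofReal_neg,
      Complex.dist_mul_sin_add_cos_mul_I_horizontal D α _ hD.le, ← Real.tan_neg]
    refine mul_le_of_le_one_right hD.le (Real.abs_sin_sub_cos_mul_tan_le_one ?_ ?_) <;>
      rw [abs_neg, abs_of_pos (by positivity : 0 < π / 5)]
    · linarith [Real.pi_pos]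
    · rw [abs_of_nonneg (by linarith [Real.pi_pos])]
      linarith
  have hbr : dist b r ≤ dist b a := by
    rw [hba, hb, hr, Complex.dist_mul_sin_add_cos_mul_I_horizontal D α _ hD.le]
    refine mul_le_of_le_one_right hD.le (Real.abs_sin_sub_cos_mul_tan_le_one ?_ ?_) <;>
      rw [abs_of_pos (by positivity : 0 < π / 5)]
    · linarith [Real.pi_pos]
    · rw [abs_of_nonpos (by linarith [Real.pi_pos])]
      linarith
  have hvertices : ({a, l, r} : Set ℂ) ⊆ Metric.closedBall b (dist b a) := by
    rintro x (hx | hx | hx) <;> rw [hx, Metric.mem_closedBall, dist_comm]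
    exacts [hbl, hbr]
  refine ⟨hbl, hbr, fun p hp => ?_⟩
  rw [dist_comm, ← Metric.mem_closedBall]
  exact convexHull_min hvertices (convex_closedBall b _) hp
end
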